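/- arXiv:0712.2566 — 3 statements merged into one kernel-verified Lean document; each statement's English description precedes it below -/
import Mathlib

section
/- Two square matrices A and B over a field K are similar if and only if the polynomial matrices xI - A and xI - B are equivalent over the polynomial ring K[x], i.e., there exist matrices P(x), Q(x) invertible over K[x] with P(x)(xI - A)Q(x) = xI - B. -/
open Polynomial

section Aux

variable {R : Type*} [Ring R]

/-- Right evaluation of a polynomial over a noncommutative ring:
`Σ (coeff f i) * b^i`. -/
private noncomputable def rev (b : R) (f : R[X]) : R := f.eval₂ (RingHom.id R) b

private lemma rev_add (b : R) (f g : R[X]) : rev b (f + g) = rev b f + rev b g :=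
  eval₂_add _ _

private lemma rev_C (b c : R) : rev b (C c) = c := eval₂_C _ _

private lemma rev_one (b : R) : rev b 1 = 1 := eval₂_one _ _

private lemma rev_mul_X (b : R) (f : R[X]) : rev b (f * X) = rev b f * b :=
  eval₂_mul_X _ _

private lemma rev_monomial (b : R) (m : ℕ) (a : R) : rev b (monomial m a) = a * b ^ m :=
  eval₂_monomial _ _

private lemma rev_C_mul (b c : R) (f : R[X]) : rev b (C c * f) = c * rev b f := by
  induction f using Polynomial.induction_on' with
  | add p q hp hq => rw [mul_add, rev_add, rev_add, hp, hq, mul_add]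
  | monomial n a =>
      rw [C_mul_monomial, rev_monomial, rev_monomial, mul_assoc]

private lemma rev_mul_C_self (b : R) (f : R[X]) : rev b (f * C b) = rev b f * b := by
  have := eval₂_mul_C' (f := RingHom.id R) (x := b) (a := b) (p := f) (Commute.refl b)
  simpa [rev] using this

private lemma rev_mul_sub (b : R) (f : R[X]) : rev b (f * (X - C b)) = 0 := by
  have h : f * (X - C b) = f * X - f * C b := mul_sub f X (C b)
  rw [h, rev, eval₂_sub, ← rev, ← rev, rev_mul_X, rev_mul_C_self, sub_self]

private lemma rev_sub_mul (a b : R) (f : R[X]) :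
    rev b ((X - C a) * f) = rev b f * b - a * rev b f := by
  have h : (X - C a) * f = f * X - C a * f := by
    rw [sub_mul, X_mul]
  rw [h, rev, eval₂_sub, ← rev, ← rev, rev_mul_X, rev_C_mul]

/-- Division with remainder by `X - C b` on the right. -/
private lemma exists_rev_decomp (b : R) (f : R[X]) :
    ∃ g : R[X], f = g * (X - C b) + C (rev b f) := by
  induction f using Polynomial.induction_on' with
  | add p q hp hq =>
      obtain ⟨g₁, h₁⟩ := hp
      obtain ⟨g₂, h₂⟩ := hq
      refine ⟨g₁ + g₂, ?_⟩
      rw [rev_add, C_add]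
      conv_lhs => rw [h₁, h₂]
      noncomm_ring
  | monomial m a =>
      induction m with
      | zero =>
          exact ⟨0, by simp [Polynomial.monomial_zero_left, rev_C]⟩
      | succ k ih =>
          obtain ⟨g, hg⟩ := ih
          refine ⟨g * X + C (rev b (monomial k a)), ?_⟩
          have h1 : (monomial (k+1) a : R[X]) = monomial k a * X := by
            rw [← C_mul_X_pow_eq_monomial, ← C_mul_X_pow_eq_monomial, mul_assoc, pow_succ]
          rw [h1, rev_mul_X, C_mul]
          conv_lhs => rw [hg]
          have hX : (X - C b) * X = X * (X - C b) :=
            ((Polynomial.commute_X (X - C b)).symm).eq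
          calc (g * (X - C b) + C (rev b (monomial k a))) * X
              = g * (X * (X - C b)) + C (rev b (monomial k a)) * X := by
                rw [add_mul, mul_assoc, hX]
            _ = (g * X + C (rev b (monomial k a))) * (X - C b)
                + C (rev b (monomial k a)) * C b := by noncomm_ring

end Aux

/-- Two square matrices `A`, `B` over a field `K` are similar if and only if the
polynomial matrices `X•1 - A` and `X•1 - B` (the characteristic matrices) are
equivalent over `K[x]`. -/
theorem similar_iff_charmatrix_equivalent {K : Type*} [Field K] {n : ℕ}
    (A B : Matrix (Fin n) (Fin n) K) :
    (∃ R : (Matrix (Fin n) (Fin n) K)ˣ, B = (R⁻¹).val * A * R.val) ↔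
      ∃ P Q : Matrix (Fin n) (Fin n) (Polynomial K), IsUnit P ∧ IsUnit Q ∧
        P * Matrix.charmatrix A * Q = Matrix.charmatrix B := by
  constructor
  · rintro ⟨R, hR⟩
    refine ⟨(C : K →+* K[X]).mapMatrix (R⁻¹).val, (C : K →+* K[X]).mapMatrix R.val,
      ?_, ?_, ?_⟩
    · exact (Units.map ((C : K →+* K[X]).mapMatrix.toMonoidHom) R⁻¹).isUnit
    · exact (Units.map ((C : K →+* K[X]).mapMatrix.toMonoidHom) R).isUnit
    · have hcomm' := fun (M : Matrix (Fin n) (Fin n) K) => (Matrix.scalar_commute (X : K[X])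
          (fun r => Polynomial.commute_X r)
          ((C : K →+* K[X]).mapMatrix M)).eq
      simp only [Matrix.charmatrix]
      rw [mul_sub, sub_mul]
      congr 1
      · rw [← hcomm' (R⁻¹).val, mul_assoc, ← map_mul, Units.inv_mul, map_one, mul_one]
      · rw [← map_mul, ← map_mul, hR]
  · rintro ⟨P, Q, hP, hQ, h⟩
    have e := congrArg matPolyEquiv h
    rw [map_mul, map_mul, Matrix.matPolyEquiv_charmatrix,
      Matrix.matPolyEquiv_charmatrix] at e
    set p : (Matrix (Fin n) (Fin n) K)[X] := matPolyEquiv P with hp_def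
    set q : (Matrix (Fin n) (Fin n) K)[X] := matPolyEquiv Q with hq_def
    have hp : IsUnit p := hP.map (matPolyEquiv :
      Matrix (Fin n) (Fin n) K[X] ≃ₐ[K] (Matrix (Fin n) (Fin n) K)[X])
    have hq : IsUnit q := hQ.map (matPolyEquiv :
      Matrix (Fin n) (Fin n) K[X] ≃ₐ[K] (Matrix (Fin n) (Fin n) K)[X])
    set S : Matrix (Fin n) (Fin n) K := rev B q with hS_def
    have h1 : (X - C A) * q = (↑hp.unit⁻¹ : (Matrix (Fin n) (Fin n) K)[X]) * (X - C B) := by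
      rw [← e, ← mul_assoc, ← mul_assoc, hp.val_inv_mul, one_mul]
    have hAS : S * B - A * S = 0 := by
      have := congrArg (rev B) h1
      rwa [rev_sub_mul, rev_mul_sub] at this
    set N : (Matrix (Fin n) (Fin n) K)[X] := ((hq.unit⁻¹ :
      ((Matrix (Fin n) (Fin n) K)[X])ˣ) : (Matrix (Fin n) (Fin n) K)[X]) with hN_def
    have hqN : q * N = 1 := hq.mul_val_inv
    have hBN : (X - C B) * N = p * (X - C A) := by
      have h3 : p * (X - C A) * q * N = (X - C B) * N := by rw [e]
      rwa [mul_assoc (p * (X - C A)) q N, hqN, mul_one, eq_comm] at h3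
    obtain ⟨g, hg⟩ := exists_rev_decomp B q
    rw [← hS_def] at hg
    have key : (1 : (Matrix (Fin n) (Fin n) K)[X]) = g * p * (X - C A) + C S * N := by
      calc (1 : (Matrix (Fin n) (Fin n) K)[X]) = q * N := hqN.symm
        _ = (g * (X - C B) + C S) * N := by conv_lhs => rw [hg]
        _ = g * ((X - C B) * N) + C S * N := by rw [add_mul, mul_assoc]
        _ = g * (p * (X - C A)) + C S * N := by rw [hBN]
        _ = g * p * (X - C A) + C S * N := by rw [mul_assoc]
    have hST : S * rev A N = 1 := by
      have := congrArg (rev A) key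
      rwa [rev_one, rev_add, rev_mul_sub, rev_C_mul, zero_add, eq_comm] at this
    have hTS : rev A N * S = 1 := mul_eq_one_comm.mp hST
    refine ⟨⟨S, rev A N, hST, hTS⟩, ?_⟩
    show B = rev A N * A * S
    have hAS' : A * S = S * B := by
      have := sub_eq_zero.mp hAS
      exact this.symm
    calc B = (rev A N * S) * B := by rw [hTS, one_mul]
      _ = rev A N * (S * B) := by rw [mul_assoc]
      _ = rev A N * (A * S) := by rw [hAS']
      _ = rev A N * A * S := by rw [mul_assoc]
end

section
/- Weierstrass's 1858 lemma: if A is a real symmetric matrix and λ is a root of the characteristic polynomial S(x) = det(xI - A) of multiplicity p, then λ is a root of every (n-1)×(n-1) minor of xI - A with multiplicity at least p - 1; equivalently, (x - λ)^{p-1} divides the gcd S₁(x) of the first minors. -/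
open Polynomial

/-- Every embedding `Fin m ↪ Fin (m+1)` factors as a `succAbove` composed with a
permutation of `Fin m`. -/
lemma embed_factor {m : ℕ} (e : Fin m ↪ Fin (m + 1)) :
    ∃ (i : Fin (m + 1)) (σ : Equiv.Perm (Fin m)), ∀ x, e x = i.succAbove (σ x) := by
  obtain ⟨i, hi⟩ : ∃ i, i ∉ Set.range e := by
    by_contra h
    push_neg at h
    have hs : Function.Surjective e := fun i => h i
    have := Fintype.card_le_of_surjective e hs
    simp at this
  have hne : ∀ x, e x ≠ i := fun x h => hi ⟨x, h⟩
  have hex : ∀ x, ∃ y, i.succAbove y = e x := fun x => Fin.exists_succAbove_eq (hne x)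
  classical
  let σ₀ : Fin m → Fin m := fun x => (hex x).choose
  have hσ₀ : ∀ x, i.succAbove (σ₀ x) = e x := fun x => (hex x).choose_spec
  have hinj : Function.Injective σ₀ := by
    intro a b h
    apply e.injective
    rw [← hσ₀, ← hσ₀, h]
  refine ⟨i, Equiv.ofBijective σ₀ (Finite.injective_iff_bijective.mp hinj), fun x => ?_⟩
  exact (hσ₀ x).symm

/-- Weierstrass's 1858 lemma: if `A` is a real symmetric matrix and `λ` is a root of the
characteristic polynomial of multiplicity `p`, then `λ` is a root of multiplicity at
least `p - 1` of every `(n-1) × (n-1)` minor of `xI - A`; in particular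
`(x - λ)^(p-1)` divides the gcd `S₁(x)` of the first minors. -/
theorem weierstrass_1858_lemma {n : ℕ} (A : Matrix (Fin n) (Fin n) ℝ) (hA : A.IsSymm)
    (lam : ℝ) (hroot : A.charpoly.IsRoot lam) :
    ∀ f g : Fin (n - 1) ↪ Fin n,
      (X - C lam) ^ (A.charpoly.rootMultiplicity lam - 1) ∣
        ((Matrix.charmatrix A).submatrix f g).det := by
  classical
  rcases n with _ | m
  · exfalso
    have h1 : A.charpoly = 1 := by
      rw [Matrix.charpoly, Matrix.det_isEmpty]
    rw [h1] at hroot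
    simp [Polynomial.IsRoot] at hroot
  intro f g
  -- A is Hermitian
  have hH : A.IsHermitian := by
    rwa [Matrix.IsHermitian, Matrix.conjTranspose_eq_transpose_of_trivial]
  set d : Fin (m + 1) → ℝ := RCLike.ofReal ∘ hH.eigenvalues with hd
  set V : Matrix (Fin (m + 1)) (Fin (m + 1)) ℝ := (hH.eigenvectorUnitary : Matrix (Fin (m + 1)) (Fin (m + 1)) ℝ) with hV
  have hspec : A = V * Matrix.diagonal d * star V := hH.spectral_theorem
  have hVW : V * star V = 1 := Matrix.mem_unitaryGroup_iff.mp hH.eigenvectorUnitary.2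
  have hWV : star V * V = 1 := Matrix.mem_unitaryGroup_iff'.mp hH.eigenvectorUnitary.2
  -- matrices over ℝ[X]
  set V' : Matrix (Fin (m + 1)) (Fin (m + 1)) ℝ[X] := V.map C with hV'
  set W' : Matrix (Fin (m + 1)) (Fin (m + 1)) ℝ[X] := (star V).map C with hW'
  set D' : Matrix (Fin (m + 1)) (Fin (m + 1)) ℝ[X] :=
    Matrix.diagonal (fun i => X - C (d i)) with hD'
  have hVW' : V' * W' = 1 := by
    rw [hV', hW', ← Matrix.map_mul, hVW, Matrix.map_one _ (map_zero C) (map_one C)]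
  have hWV' : W' * V' = 1 := by
    rw [hV', hW', ← Matrix.map_mul, hWV, Matrix.map_one _ (map_zero C) (map_one C)]
  -- factorization of the characteristic matrix
  have key : Matrix.charmatrix A = V' * D' * W' := by
    have hDdiag : D' = Matrix.charmatrix (Matrix.diagonal d) := by
      ext i j
      by_cases h : i = j
      · subst h; simp [hD', Matrix.charmatrix_apply, Matrix.diagonal]
      · simp [hD', Matrix.charmatrix_apply, Matrix.diagonal_apply_ne _ h, h]
    rw [hDdiag]
    rw [Matrix.charmatrix, Matrix.charmatrix]
    have hscal : Matrix.scalar (Fin (m+1)) (X : ℝ[X]) =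
        (X : ℝ[X]) • (1 : Matrix (Fin (m+1)) (Fin (m+1)) ℝ[X]) := by
      apply Matrix.ext
      intro i j
      by_cases h : i = j <;>
        simp [Matrix.scalar_apply, Matrix.smul_apply, Matrix.one_apply, h,
          Matrix.diagonal_apply_ne, Matrix.diagonal_apply_eq]
    rw [hscal, Matrix.mul_sub, Matrix.sub_mul]
    congr 1
    · rw [mul_smul_comm, mul_one, smul_mul_assoc, hVW']
    · rw [RingHom.mapMatrix_apply, RingHom.mapMatrix_apply, hspec]
      rw [Matrix.map_mul, Matrix.map_mul]
  -- charpoly as product of linear factors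
  have hcp : A.charpoly = ∏ i, (X - C (d i)) := by
    rw [Matrix.charpoly, key, Matrix.det_mul_right_comm, hVW', one_mul, hD',
      Matrix.det_diagonal]
  -- multiplicity equals number of eigenvalues equal to lam
  set S : Finset (Fin (m + 1)) := Finset.univ.filter (fun i => d i = lam) with hS
  have hp : A.charpoly.rootMultiplicity lam = S.card := by
    rw [← Polynomial.count_roots, hcp]
    have hprod : ∏ i, (X - C (d i)) =
        ((Finset.univ.val.map d).map fun a => X - C a).prod := by
      rw [Multiset.map_map]
      rfl
    rw [hprod, Polynomial.roots_multiset_prod_X_sub_C]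
    rw [Multiset.count_map]
    have hfilt : Multiset.filter (fun a => lam = d a) Finset.univ.val =
        Multiset.filter (fun a => d a = lam) Finset.univ.val := by
      apply Multiset.filter_congr
      intro x _
      exact ⟨Eq.symm, Eq.symm⟩
    rw [hfilt, hS, Finset.card, Finset.filter_val]
  -- key divisibility: every entry of the adjugate of charmatrix is divisible
  set a : ℝ[X] := (X - C lam) ^ (A.charpoly.rootMultiplicity lam - 1) with ha
  set e : Fin (m + 1) → ℝ[X] := fun k => ∏ l ∈ Finset.univ.erase k, (X - C (d l)) with he
  have hdvd_e : ∀ k, a ∣ e k := by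
    intro k
    have h1 : ∏ l ∈ S.erase k, (X - C (d l)) ∣ e k := by
      apply Finset.prod_dvd_prod_of_subset
      exact Finset.erase_subset_erase _ (Finset.filter_subset _ _)
    have h2 : ∏ l ∈ S.erase k, (X - C (d l)) = (X - C lam) ^ (S.erase k).card := by
      apply Finset.prod_eq_pow_card
      intro l hl
      have : d l = lam := (Finset.mem_filter.mp (Finset.mem_of_mem_erase hl)).2
      rw [this]
    have h3 : A.charpoly.rootMultiplicity lam - 1 ≤ (S.erase k).card := by
      rw [hp]
      exact Finset.pred_card_le_card_erase
    calc a ∣ (X - C lam) ^ (S.erase k).card := pow_dvd_pow _ h3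
      _ = ∏ l ∈ S.erase k, (X - C (d l)) := h2.symm
      _ ∣ e k := h1
  -- adjugate of the characteristic matrix
  have hadj : Matrix.adjugate (Matrix.charmatrix A) = V' * Matrix.diagonal e * W' := by
    rw [key, Matrix.adjugate_mul_distrib, Matrix.adjugate_mul_distrib, hD',
      Matrix.adjugate_diagonal]
    have hadjV : Matrix.adjugate V' = V'.det • W' := by
      have h1 : V' * Matrix.adjugate V' = V'.det • 1 := Matrix.mul_adjugate V'
      calc Matrix.adjugate V' = 1 * Matrix.adjugate V' := (one_mul _).symm
        _ = (W' * V') * Matrix.adjugate V' := by rw [hWV']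
        _ = W' * (V' * Matrix.adjugate V') := by rw [Matrix.mul_assoc]
        _ = W' * (V'.det • 1) := by rw [h1]
        _ = V'.det • W' := by rw [Matrix.mul_smul, Matrix.mul_one]
    have hadjW : Matrix.adjugate W' = W'.det • V' := by
      have h1 : W' * Matrix.adjugate W' = W'.det • 1 := Matrix.mul_adjugate W'
      calc Matrix.adjugate W' = 1 * Matrix.adjugate W' := (one_mul _).symm
        _ = (V' * W') * Matrix.adjugate W' := by rw [hVW']
        _ = V' * (W' * Matrix.adjugate W') := by rw [Matrix.mul_assoc]
        _ = V' * (W'.det • 1) := by rw [h1]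
        _ = W'.det • V' := by rw [Matrix.mul_smul, Matrix.mul_one]
    have hdet1 : W'.det * V'.det = 1 := by
      rw [← Matrix.det_mul, hWV', Matrix.det_one]
    rw [hadjV, hadjW]
    simp only [Matrix.smul_mul, Matrix.mul_smul, smul_smul]
    rw [mul_comm V'.det W'.det, hdet1, one_smul, ← Matrix.mul_assoc]
  have hdvd_adj : ∀ i j, a ∣ Matrix.adjugate (Matrix.charmatrix A) i j := by
    intro i j
    rw [hadj]
    rw [Matrix.mul_assoc]
    rw [Matrix.mul_apply]
    apply Finset.dvd_sum
    intro k _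
    have : (Matrix.diagonal e * W') k j = e k * W' k j := by
      rw [Matrix.diagonal_mul]
    rw [this]
    exact ((hdvd_e k).mul_right _).mul_left _
  -- divisibility of the basic minors
  have hdvd_minor : ∀ i j : Fin (m + 1),
      a ∣ ((Matrix.charmatrix A).submatrix i.succAbove j.succAbove).det := by
    intro i j
    have h1 := hdvd_adj j i
    rw [Matrix.adjugate_fin_succ_eq_det_submatrix] at h1
    have h2 := h1.mul_left ((-1 : ℝ[X]) ^ (i + j : ℕ))
    have h3 : (-1 : ℝ[X]) ^ (i + j : ℕ) *
        ((-1 : ℝ[X]) ^ (i + j : ℕ) *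
          ((Matrix.charmatrix A).submatrix i.succAbove j.succAbove).det) =
        ((Matrix.charmatrix A).submatrix i.succAbove j.succAbove).det := by
      rw [← mul_assoc, ← pow_add, Even.neg_one_pow ⟨(i + j : ℕ), rfl⟩, one_mul]
    rwa [h3] at h2
  -- conclude for arbitrary embeddings
  obtain ⟨i, σ, hσ⟩ := embed_factor f
  obtain ⟨j, τ, hτ⟩ := embed_factor g
  have hsub : (Matrix.charmatrix A).submatrix f g =
      ((Matrix.charmatrix A).submatrix i.succAbove j.succAbove).submatrix σ τ := by
    apply Matrix.ext
    intro x y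
    exact congrArg₂ A.charmatrix (hσ x) (hτ y)
  rw [hsub]
  set M := (Matrix.charmatrix A).submatrix i.succAbove j.succAbove with hM
  have hperm : (M.submatrix σ τ).det =
      (Equiv.Perm.sign σ : ℝ[X]) * ((Equiv.Perm.sign τ : ℝ[X]) * M.det) := by
    have h1 : M.submatrix σ τ = (M.submatrix id τ).submatrix σ id := by
      ext x y; rfl
    rw [h1, Matrix.det_permute, Matrix.det_permute']
  rw [hperm]
  exact ((hdvd_minor i j).mul_left _).mul_left _
end

section
/- Jordan's 1871 criterion: a matrix A over an algebraically closed field is diagonalizable if and only if each eigenvalue λ of algebraic multiplicity μ is a root of multiplicity at least μ - 1 of every (n-1)×(n-1) minor of xI - A (equivalently (x-λ)^{μ-1} divides the gcd of the first minors of xI - A). -/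
/-!
Factor the characteristic polynomial as `χ = D * p`, where `p = ∏ (X - λ)` runs over the distinct
eigenvalues and `D = ∏ (X - λ) ^ (μ_λ - 1)`. The matrix `A` is diagonalizable iff `p(A) = 0`: a
squarefree annihilating polynomial makes `A` semisimple, hence it has an eigenbasis over an
algebraically closed field. Since `adj(XI - A) * (XI - A) = χ I` and `p(X) I - p(A) = (XI - A) H(X)`
for some polynomial matrix `H`, we have `p(A) = 0` iff `D` divides every entry of `adj(XI - A)`,
i.e. every first minor of `XI - A`. The factors of `D` being pairwise coprime, this is Jordan's
condition.
-/

open Polynomial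

namespace Polynomial

variable {K : Type*} [Field K] [DecidableEq K]

noncomputable def distinctRootsProd (q : K[X]) : K[X] := ∏ a ∈ q.roots.toFinset, (X - C a)

noncomputable def repeatedRootsProd (q : K[X]) : K[X] :=
  ∏ a ∈ q.roots.toFinset, (X - C a) ^ (q.rootMultiplicity a - 1)

lemma monic_distinctRootsProd (q : K[X]) : q.distinctRootsProd.Monic :=
  monic_prod_of_monic _ _ fun a _ => monic_X_sub_C a

lemma monic_repeatedRootsProd (q : K[X]) : q.repeatedRootsProd.Monic :=
  monic_prod_of_monic _ _ fun a _ => (monic_X_sub_C a).pow _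

lemma squarefree_distinctRootsProd (q : K[X]) : Squarefree q.distinctRootsProd :=
  ((separable_prod_X_sub_C_iff' (f := id)).mpr fun _ _ _ _ h => h).squarefree

lemma repeatedRootsProd_mul_distinctRootsProd {q : K[X]} (hmonic : q.Monic) (hsplit : q.Splits) :
    q.repeatedRootsProd * q.distinctRootsProd = q := by
  conv_rhs => rw [hsplit.eq_prod_roots_of_monic hmonic, Finset.prod_multiset_map_count]
  rw [repeatedRootsProd, distinctRootsProd, ← Finset.prod_mul_distrib]
  refine Finset.prod_congr rfl fun a ha => ?_
  have hpos : 0 < q.rootMultiplicity a :=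
    (rootMultiplicity_pos hmonic.ne_zero).mpr (isRoot_of_mem_roots (Multiset.mem_toFinset.mp ha))
  rw [count_roots, ← pow_succ, Nat.sub_add_cancel hpos]

lemma repeatedRootsProd_dvd_iff {q : K[X]} (hq : q ≠ 0) {r : K[X]} :
    q.repeatedRootsProd ∣ r ↔
      ∀ a, q.IsRoot a → (X - C a) ^ (q.rootMultiplicity a - 1) ∣ r := by
  simp_rw [← mem_roots hq, ← Multiset.mem_toFinset]
  refine ⟨fun h a ha =>
    (Finset.dvd_prod_of_mem (fun a => (X - C a) ^ (q.rootMultiplicity a - 1)) ha).trans h,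
    fun h => Finset.prod_dvd_of_coprime (fun a _ b _ hab => ?_) h⟩
  exact (isCoprime_X_sub_C_of_isUnit_sub (sub_ne_zero.mpr hab).isUnit).pow

lemma eval_distinctRootsProd_eq_zero {q : K[X]} (hq : q ≠ 0) {a : K} (ha : q.IsRoot a) :
    q.distinctRootsProd.eval a = 0 := by
  rw [distinctRootsProd, eval_prod]
  exact Finset.prod_eq_zero (Multiset.mem_toFinset.mpr ((mem_roots hq).mpr ha)) (by simp)

end Polynomial

lemma Polynomial.aeval_units_conj {R A : Type*} [CommSemiring R] [Semiring A] [Algebra R A]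
    (u : Aˣ) (x : A) (p : R[X]) :
    aeval (u.val * x * (u⁻¹).val) p = u.val * aeval x p * (u⁻¹).val := by
  induction p using Polynomial.induction_on' with
  | add p q hp hq => rw [map_add, map_add, hp, hq, mul_add, add_mul]
  | monomial k a =>
    rw [aeval_monomial, aeval_monomial, Units.conj_pow, ← mul_assoc, ← mul_assoc,
      Algebra.commutes, mul_assoc (u : A)]

lemma Fin.exists_succAbove_comp_perm_eq {m : ℕ} (f : Fin m ↪ Fin (m + 1)) :
    ∃ (i : Fin (m + 1)) (e : Equiv.Perm (Fin m)), ⇑f = i.succAbove ∘ e := by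
  obtain ⟨i, hi⟩ : ∃ i, i ∉ Set.range f := by
    by_contra! h
    have := Fintype.card_le_of_surjective f fun i => h i
    simp at this
  obtain ⟨g, hg⟩ := Set.range_subset_range_iff_exists_comp.mp
    (by rwa [Fin.range_succAbove, Set.subset_compl_singleton_iff] :
      Set.range f ⊆ Set.range i.succAbove)
  have hg_inj : Function.Injective g := .of_comp (hg ▸ f.injective)
  exact ⟨i, .ofBijective g hg_inj.bijective_of_finite, hg⟩

lemma Module.End.exists_basis_eigenvectors_of_isSemisimple {K V : Type*} [Field K]
    [IsAlgClosed K] [AddCommGroup V] [Module K V] [FiniteDimensional K V] {f : End K V}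
    (hf : f.IsSemisimple) {ι : Type*} [Fintype ι] (hι : Fintype.card ι = Module.finrank K V) :
    ∃ (b : Module.Basis ι K V) (d : ι → K), ∀ i, f (b i) = d i • b i := by
  classical
  have hint : DirectSum.IsInternal f.eigenspace :=
    DirectSum.isInternal_submodule_of_iSupIndep_of_iSup_eq_top f.eigenspaces_iSupIndep
      hf.iSup_eigenspace_eq_top
  let b := hint.collectedBasis fun μ => Module.Basis.ofVectorSpace K (f.eigenspace μ)
  have : Fintype _ := FiniteDimensional.fintypeBasisIndex b
  let e := Fintype.equivOfCardEq ((Module.finrank_eq_card_basis b).symm.trans hι.symm)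
  refine ⟨b.reindex e, fun i => (e.symm i).1, fun i => ?_⟩
  rw [b.reindex_apply]
  exact mem_eigenspace_iff.mp (hint.collectedBasis_mem _ _)

namespace Matrix

section CommRing

variable {R ι : Type*} [CommRing R] [Fintype ι] [DecidableEq ι]

lemma det_submatrix_perm (M : Matrix ι ι R) (e₁ e₂ : Equiv.Perm ι) :
    (M.submatrix e₁ e₂).det = Equiv.Perm.sign e₁ * Equiv.Perm.sign e₂ * M.det := by
  rw [mul_assoc, ← det_permute', ← det_permute, submatrix_submatrix]
  rfl

lemma exists_associated_adjugate_det_submatrix {m : ℕ}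
    (M : Matrix (Fin (m + 1)) (Fin (m + 1)) R) (f g : Fin m ↪ Fin (m + 1)) :
    ∃ i j, Associated (M.adjugate j i) (M.submatrix f g).det := by
  obtain ⟨i, e₁, hf⟩ := Fin.exists_succAbove_comp_perm_eq f
  obtain ⟨j, e₂, hg⟩ := Fin.exists_succAbove_comp_perm_eq g
  refine ⟨i, j, ?_⟩
  rw [hf, hg, ← submatrix_submatrix, det_submatrix_perm, adjugate_fin_succ_eq_det_submatrix]
  exact (associated_unit_mul_left _ _ (isUnit_neg_one.pow _)).trans
    (associated_unit_mul_left _ _ (((Equiv.Perm.sign e₁).isUnit.map (Int.castRingHom R)).mul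
      ((Equiv.Perm.sign e₂).isUnit.map (Int.castRingHom R)))).symm

lemma forall_dvd_det_submatrix_iff_forall_dvd_adjugate {m : ℕ}
    (M : Matrix (Fin (m + 1)) (Fin (m + 1)) R) (q : R) :
    (∀ f g : Fin m ↪ Fin (m + 1), q ∣ (M.submatrix f g).det) ↔ ∀ i j, q ∣ M.adjugate i j := by
  refine ⟨fun h i j => ?_, fun h f g => ?_⟩
  · rw [adjugate_fin_succ_eq_det_submatrix]
    exact (h (Fin.succAboveEmb j) (Fin.succAboveEmb i)).mul_left _
  · obtain ⟨i, j, hij⟩ := M.exists_associated_adjugate_det_submatrix f g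
    exact hij.dvd_iff_dvd_right.mp (h j i)

lemma aeval_diagonal (d : ι → R) (p : R[X]) :
    aeval (diagonal d) p = diagonal fun i => p.eval (d i) := by
  induction p using Polynomial.induction_on' with
  | add p q hp hq => simp only [map_add, hp, hq, eval_add, diagonal_add]
  | monomial k a => simp [aeval_monomial, diagonal_pow, algebraMap_eq_diagonal]

lemma exists_eq_conj_diagonal_of_mulVec_basis_eq_smul (A : Matrix ι ι R)
    (b : Module.Basis ι R (ι → R)) (d : ι → R) (h : ∀ i, A *ᵥ b i = d i • b i) :
    ∃ P : (Matrix ι ι R)ˣ, A = P.val * diagonal d * (P⁻¹).val := by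
  let P := (Pi.basisFun R ι).toMatrix b
  have : Invertible P := (Pi.basisFun R ι).invertibleToMatrix b
  have hP : ∀ i j, P i j = b j i := fun i j => by simp [P, Module.Basis.toMatrix_apply]
  have hAP : A * P = P * diagonal d := by
    ext i j
    rw [mul_diagonal, hP, mul_comm]
    simpa [mul_apply, mulVec, dotProduct, hP] using congrFun (h j) i
  refine ⟨unitOfInvertible P, ?_⟩
  change A = P * diagonal d * ⅟P
  rw [← hAP, Matrix.mul_assoc, mul_invOf_self, Matrix.mul_one]

/- The factor theorem `Y - X ∣ p(Y) - p(X)` in `R[X][Y]`, evaluated at `Y := A`, which commutes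
with the scalar matrix `X • 1`. -/
lemma exists_smul_one_sub_eq_charmatrix_mul (A : Matrix ι ι R) (p : R[X]) :
    ∃ H : Matrix ι ι R[X], p • (1 : Matrix ι ι R[X]) - (aeval A p).map C = charmatrix A * H := by
  obtain ⟨h, hh⟩ := X_sub_C_dvd_sub_C_eval (p := p.map (algebraMap R R[X])) (a := X)
  refine ⟨aeval (A.map C) h, ?_⟩
  have hA : aeval (A.map C) (p.map (algebraMap R R[X])) = (aeval A p).map C := by
    rw [aeval_map_algebraMap]
    exact aeval_algHom_apply (AlgHom.mapMatrix (Algebra.ofId R R[X])) A p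
  have := congrArg (aeval (A.map C)) hh
  rw [map_sub, map_mul, aeval_C, hA, eval_map_algebraMap, aeval_X_left_apply, map_sub, aeval_X,
    aeval_C, Algebra.algebraMap_eq_smul_one, Algebra.algebraMap_eq_smul_one] at this
  rw [← neg_sub, this, ← neg_mul, neg_sub, charmatrix, scalar_apply, smul_one_eq_diagonal]
  rfl

lemma aeval_eq_zero_iff_forall_dvd_adjugate_charmatrix (A : Matrix ι ι R) {d p : R[X]}
    (hd : d.Monic) (hp : p.Monic) (hχ : d * p = A.charpoly) :
    aeval A p = 0 ↔ ∀ i j, d ∣ (charmatrix A).adjugate i j := by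
  have hadj : (charmatrix A).adjugate * charmatrix A = (d * p) • (1 : Matrix ι ι R[X]) := by
    rw [adjugate_mul, hχ, charpoly]
  constructor
  · intro h0 i j
    obtain ⟨H, hH⟩ := A.exists_smul_one_sub_eq_charmatrix_mul p
    rw [h0, Matrix.map_zero _ C_0, sub_zero] at hH
    have : p • (charmatrix A).adjugate = p • (d • H) := by
      rw [← mul_smul_one, hH, ← Matrix.mul_assoc, hadj, smul_mul, one_mul, mul_comm, mul_smul]
    exact ⟨H i j, by rw [hp.isRegular.left.isSMulRegular.matrix this, smul_apply, smul_eq_mul]⟩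
  · intro h
    choose B hB using h
    have hkey : of B * charmatrix A = p • (1 : Matrix ι ι R[X]) := by
      rw [show (charmatrix A).adjugate = d • of B from Matrix.ext hB, smul_mul, mul_smul] at hadj
      exact hd.isRegular.left.isSMulRegular.matrix hadj
    have := congrArg (fun M => (matPolyEquiv M).eval A) hkey
    simpa [matPolyEquiv_charmatrix, eval_mul_X_sub_C, matPolyEquiv_smul_one, eval_map, aeval_def]
      using this.symm

end CommRing

theorem exists_eq_conj_diagonal_iff_aeval_distinctRootsProd_charpoly_eq_zero {K ι : Type*}
    [Field K] [IsAlgClosed K] [DecidableEq K] [Fintype ι] [DecidableEq ι] (A : Matrix ι ι K) :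
    (∃ (P : (Matrix ι ι K)ˣ) (d : ι → K), A = P.val * diagonal d * (P⁻¹).val) ↔
      aeval A A.charpoly.distinctRootsProd = 0 := by
  constructor
  · rintro ⟨P, d, rfl⟩
    have hroot : ∀ i, (diagonal d).charpoly.IsRoot (d i) := fun i => by
      rw [charpoly_diagonal, IsRoot, eval_prod]
      exact Finset.prod_eq_zero (Finset.mem_univ i) (by simp)
    have hvanish : (fun i => (diagonal d).charpoly.distinctRootsProd.eval (d i)) = 0 :=
      funext fun i => eval_distinctRootsProd_eq_zero (charpoly_monic _).ne_zero (hroot i)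
    rw [aeval_units_conj, coe_units_inv, charpoly_units_conj, aeval_diagonal, hvanish,
      diagonal_zero', Matrix.mul_zero, Matrix.zero_mul]
  · intro h0
    have hss : Module.End.IsSemisimple (toLin' A) := by
      refine Module.End.isSemisimple_of_squarefree_aeval_eq_zero
        (squarefree_distinctRootsProd A.charpoly) ?_
      change aeval (toLinAlgEquiv' A) _ = 0
      rw [aeval_algEquiv, AlgHom.comp_apply, h0, map_zero]
    obtain ⟨b, d, hb⟩ := Module.End.exists_basis_eigenvectors_of_isSemisimple hss
      (Module.finrank_fintype_fun_eq_card K).symm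
    obtain ⟨P, hP⟩ := A.exists_eq_conj_diagonal_of_mulVec_basis_eq_smul b d fun i => by
      rw [← toLin'_apply]
      exact hb i
    exact ⟨P, d, hP⟩

end Matrix

/-- Jordan's 1871 criterion: a matrix `A` over an algebraically closed field is
diagonalizable if and only if each eigenvalue `λ` of algebraic multiplicity `μ` is a
root of multiplicity at least `μ - 1` of every `(n-1) × (n-1)` minor of `xI - A`
(equivalently `(x - λ)^(μ-1)` divides the gcd of the first minors). -/
theorem jordan_1871_criterion {K : Type*} [Field K] [IsAlgClosed K] {n : ℕ}
    (A : Matrix (Fin n) (Fin n) K) :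
    (∃ (P : (Matrix (Fin n) (Fin n) K)ˣ) (d : Fin n → K),
        A = P.val * Matrix.diagonal d * (P⁻¹).val) ↔
      ∀ lam : K, A.charpoly.IsRoot lam →
        ∀ f g : Fin (n - 1) ↪ Fin n,
          (X - C lam) ^ (A.charpoly.rootMultiplicity lam - 1) ∣
            ((Matrix.charmatrix A).submatrix f g).det := by
  classical
  obtain _ | m := n
  · exact iff_of_true ⟨1, 0, Subsingleton.elim _ _⟩ fun lam h => by simp at h
  have hχ := repeatedRootsProd_mul_distinctRootsProd A.charpoly_monic (IsAlgClosed.splits _)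
  rw [A.exists_eq_conj_diagonal_iff_aeval_distinctRootsProd_charpoly_eq_zero,
    A.aeval_eq_zero_iff_forall_dvd_adjugate_charmatrix (monic_repeatedRootsProd _)
      (monic_distinctRootsProd _) hχ]
  simp_rw [← Matrix.forall_dvd_det_submatrix_iff_forall_dvd_adjugate,
    repeatedRootsProd_dvd_iff A.charpoly_monic.ne_zero]
  exact ⟨fun h lam hlam f g => h f g lam hlam, fun h f g lam hlam => h lam hlam f g⟩
end
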